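/- arXiv:1603.08610 — 2 statements merged into one kernel-verified Lean document; each statement's English description precedes it below -/
import Mathlib

section
/- Let D be a nonempty open bounded convex subset of ℝ^k with 0 ∈ D, and let π be the metric projection onto the closure of D. Then there exists γ > 0 such that for all x ∈ ℝ^k, ⟨x, x - π(x)⟩ ≥ γ |x - π(x)|. -/
/-! With `v = x - π x`, the variational inequality of the projection onto the convex set
`closure D` gives `⟪v, w - π x⟫ ≤ 0` for every `w ∈ closure D`. Testing it with the point
`w = γ v / ‖v‖` of a ball `closedBall 0 γ ⊆ closure D` yields `γ ‖v‖ ≤ ⟪v, π x⟫`, and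
`⟪x, v⟫ = ‖v‖² + ⟪v, π x⟫`. -/

open Metric
open scoped InnerProductSpace

variable {F : Type*} [NormedAddCommGroup F] [InnerProductSpace ℝ F]

theorem real_inner_sub_le_zero_of_forall_dist_le {K : Set F} (hK : Convex ℝ K) {x p : F}
    (hp : p ∈ K) (hmin : ∀ y ∈ K, dist x p ≤ dist x y) :
    ∀ w ∈ K, ⟪x - p, w - p⟫_ℝ ≤ 0 := by
  have : Nonempty K := ⟨⟨p, hp⟩⟩
  refine (norm_eq_iInf_iff_real_inner_le_zero hK hp).mp (le_antisymm ?_ ?_)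
  · exact le_ciInf fun w => by simpa only [dist_eq_norm] using hmin w w.2
  · exact ciInf_le ⟨0, fun _ ⟨_, h⟩ => h ▸ norm_nonneg _⟩ (⟨p, hp⟩ : K)

theorem mul_norm_sub_le_real_inner_of_closedBall_subset {K : Set F} (hK : Convex ℝ K) {r : ℝ}
    (hr : 0 ≤ r) (hball : closedBall 0 r ⊆ K) {x p : F} (hp : p ∈ K)
    (hmin : ∀ y ∈ K, dist x p ≤ dist x y) :
    r * ‖x - p‖ ≤ ⟪x, x - p⟫_ℝ := by
  set v := x - p
  rcases eq_or_ne v 0 with hv | hv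
  · simp [hv]
  have hv_norm : ‖v‖ ≠ 0 := norm_ne_zero_iff.mpr hv
  set w := (r / ‖v‖) • v
  have hw : w ∈ K := hball <| by
    rw [mem_closedBall, dist_zero_right, norm_smul, Real.norm_eq_abs, abs_div, abs_norm,
      abs_of_nonneg hr, div_mul_cancel₀ r hv_norm]
  have hvw : ⟪v, w⟫_ℝ = r * ‖v‖ := by
    rw [real_inner_smul_right, real_inner_self_eq_norm_sq]
    field_simp
  have hvp : r * ‖v‖ ≤ ⟪v, p⟫_ℝ := by
    have := real_inner_sub_le_zero_of_forall_dist_le hK hp hmin w hw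
    rw [inner_sub_right, hvw] at this
    linarith
  have hx : ⟪x, v⟫_ℝ = ‖v‖ ^ 2 + ⟪v, p⟫_ℝ := by
    rw [← real_inner_self_eq_norm_sq, real_inner_comm p, ← inner_add_left]
    simp only [v, sub_add_cancel]
  nlinarith [norm_nonneg v]

theorem stmt2_general {k : ℕ} (D : Set (EuclideanSpace ℝ (Fin k)))
    (hopen : IsOpen D) (hconv : Convex ℝ D)
    (h0 : (0 : EuclideanSpace ℝ (Fin k)) ∈ D)
    (π : EuclideanSpace ℝ (Fin k) → EuclideanSpace ℝ (Fin k))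
    (hmem : ∀ x, π x ∈ closure D)
    (hmin : ∀ x, ∀ y ∈ closure D, dist x (π x) ≤ dist x y) :
    ∃ γ > (0 : ℝ), ∀ x : EuclideanSpace ℝ (Fin k),
      γ * ‖x - π x‖ ≤ (inner ℝ x (x - π x) : ℝ) := by
  obtain ⟨ε, hε, hball⟩ := Metric.isOpen_iff.mp hopen 0 h0
  have hclosedBall : closedBall 0 ε ⊆ closure D :=
    (closure_ball 0 hε.ne').symm.subset.trans (closure_mono hball)
  exact ⟨ε, hε, fun x => mul_norm_sub_le_real_inner_of_closedBall_subset hconv.closure hε.le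
    hclosedBall (hmem x) (hmin x)⟩

theorem stmt2 {k : ℕ} (D : Set (EuclideanSpace ℝ (Fin k)))
    (hopen : IsOpen D) (hbdd : Bornology.IsBounded D) (hconv : Convex ℝ D)
    (h0 : (0 : EuclideanSpace ℝ (Fin k)) ∈ D)
    (π : EuclideanSpace ℝ (Fin k) → EuclideanSpace ℝ (Fin k))
    (hmem : ∀ x, π x ∈ closure D)
    (hmin : ∀ x, ∀ y ∈ closure D, dist x (π x) ≤ dist x y) :
    ∃ γ > (0 : ℝ), ∀ x : EuclideanSpace ℝ (Fin k),
      γ * ‖x - π x‖ ≤ (inner ℝ x (x - π x) : ℝ) :=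
  stmt2_general D hopen hconv h0 π hmem hmin
end

section
/- Let D be a nonempty closed convex subset of ℝ^k with metric projection π. For any y₁, y₂ ∈ ℝ^k and n, p ≥ 0, one has -n ⟨y₁ - y₂, y₁ - π(y₁)⟩ + p ⟨y₁ - y₂, y₂ - π(y₂)⟩ ≤ (n + p) ⟨y₁ - π(y₁), y₂ - π(y₂)⟩. -/
/-!
Writing `aᵢ = yᵢ - π yᵢ` and `d = π y₁ - π y₂`, we have `y₁ - y₂ = a₁ - a₂ + d`. The variational
characterization of the projection gives `⟪a₁, d⟫ ≥ 0` and `⟪a₂, d⟫ ≤ 0`, so after expanding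
both sides the inequality reduces to `n ‖a₁‖² + p ‖a₂‖² + n ⟪a₁, d⟫ - p ⟪a₂, d⟫ ≥ 0`.
-/

open RealInnerProductSpace

section

variable {F : Type*} [NormedAddCommGroup F] [InnerProductSpace ℝ F]

theorem real_inner_sub_le_zero_of_dist_le {K : Set F} (hK : Convex ℝ K) {x z : F} (hz : z ∈ K)
    (hmin : ∀ y ∈ K, dist x z ≤ dist x y) {w : F} (hw : w ∈ K) :
    ⟪x - z, w - z⟫ ≤ 0 := by
  have : Nonempty K := ⟨⟨z, hz⟩⟩
  have hinf : ‖x - z‖ = ⨅ y : K, ‖x - y‖ :=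
    le_antisymm (le_ciInf fun y => by simpa only [dist_eq_norm] using hmin y y.2)
      (ciInf_le ⟨0, by rintro _ ⟨y, rfl⟩; exact norm_nonneg _⟩ (⟨z, hz⟩ : K))
  exact (norm_eq_iInf_iff_real_inner_le_zero hK hz).1 hinf w hw

theorem neg_mul_inner_add_mul_inner_le_of_inner_le_zero {x₁ x₂ z₁ z₂ : F} {n p : ℝ}
    (hn : 0 ≤ n) (hp : 0 ≤ p) (h₁ : ⟪x₁ - z₁, z₂ - z₁⟫ ≤ 0) (h₂ : ⟪x₂ - z₂, z₁ - z₂⟫ ≤ 0) :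
    -n * ⟪x₁ - x₂, x₁ - z₁⟫ + p * ⟪x₁ - x₂, x₂ - z₂⟫ ≤ (n + p) * ⟪x₁ - z₁, x₂ - z₂⟫ := by
  set a₁ := x₁ - z₁
  set a₂ := x₂ - z₂
  set d := z₁ - z₂
  have hx : x₁ - x₂ = a₁ - a₂ + d := by simp only [a₁, a₂, d]; abel
  have hd₁ : 0 ≤ ⟪d, a₁⟫ := by
    rw [show z₂ - z₁ = -d by simp only [d, neg_sub], inner_neg_right] at h₁
    rw [real_inner_comm]; linarith
  have hd₂ : ⟪d, a₂⟫ ≤ 0 := by rwa [real_inner_comm] at h₂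
  clear_value a₁ a₂ d
  rw [hx, inner_add_left, inner_add_left, inner_sub_left, inner_sub_left, real_inner_comm a₁ a₂]
  nlinarith [mul_nonneg hn (real_inner_self_nonneg (x := a₁)),
    mul_nonneg hp (real_inner_self_nonneg (x := a₂)), mul_nonneg hn hd₁,
    mul_nonpos_of_nonneg_of_nonpos hp hd₂]

end

theorem stmt10_general {k : ℕ} (D : Set (EuclideanSpace ℝ (Fin k)))
    (hconv : Convex ℝ D)
    (π : EuclideanSpace ℝ (Fin k) → EuclideanSpace ℝ (Fin k))
    (hmem : ∀ x, π x ∈ D)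
    (hmin : ∀ x, ∀ y ∈ D, dist x (π x) ≤ dist x y)
    (y₁ y₂ : EuclideanSpace ℝ (Fin k)) (n p : ℝ) (hn : 0 ≤ n) (hp : 0 ≤ p) :
    -n * (inner ℝ (y₁ - y₂) (y₁ - π y₁) : ℝ) + p * (inner ℝ (y₁ - y₂) (y₂ - π y₂) : ℝ) ≤
      (n + p) * (inner ℝ (y₁ - π y₁) (y₂ - π y₂) : ℝ) :=
  neg_mul_inner_add_mul_inner_le_of_inner_le_zero hn hp
    (real_inner_sub_le_zero_of_dist_le hconv (hmem y₁) (hmin y₁) (hmem y₂))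
    (real_inner_sub_le_zero_of_dist_le hconv (hmem y₂) (hmin y₂) (hmem y₁))

theorem stmt10 {k : ℕ} (D : Set (EuclideanSpace ℝ (Fin k)))
    (hne : D.Nonempty) (hcl : IsClosed D) (hconv : Convex ℝ D)
    (π : EuclideanSpace ℝ (Fin k) → EuclideanSpace ℝ (Fin k))
    (hmem : ∀ x, π x ∈ D)
    (hmin : ∀ x, ∀ y ∈ D, dist x (π x) ≤ dist x y)
    (y₁ y₂ : EuclideanSpace ℝ (Fin k)) (n p : ℝ) (hn : 0 ≤ n) (hp : 0 ≤ p) :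
    -n * (inner ℝ (y₁ - y₂) (y₁ - π y₁) : ℝ) + p * (inner ℝ (y₁ - y₂) (y₂ - π y₂) : ℝ) ≤
      (n + p) * (inner ℝ (y₁ - π y₁) (y₂ - π y₂) : ℝ) :=
  stmt10_general D hconv π hmem hmin y₁ y₂ n p hn hp
end
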